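/- arXiv:2511.00521 — 6 statements merged into one kernel-verified Lean document; each statement's English description precedes it below -/
import Mathlib

section
/- Let C₁, …, C_N be i.i.d. random variables taking values in {1, …, K} with Pr(C_u = k) = p_k, and let C̃_k^(N) = #{u : C_u = k} be the count of category k. If p_a > p_b, then Pr(C̃_a^(N) ≤ C̃_b^(N)) ≤ exp(-N·(√p_a - √p_b)²). -/
/-!
Chernoff's method applied to `X_u = 1[C_u = b] - 1[C_u = a]`, whose sum over `u` is the count
difference `C̃_b - C̃_a`. For `t ≥ 0`, `P(C̃_a ≤ C̃_b) ≤ E[exp(t ∑ X_u)] = m(t)^N` with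
`m(t) = 1 + (eᵗ - 1) p_b + (e⁻ᵗ - 1) p_a`. At `eᵗ = √(p_a / p_b)` this is `1 - D ≤ e^{-D}` with
`D = (√p_a - √p_b)²`. When `p_b = 0` the infimum of `m` is not attained, so the parameter is taken
slightly off the optimum, using the strict inequality `1 - D < e^{-D}`.
-/

open MeasureTheory ProbabilityTheory Finset Real

theorem exists_nonneg_one_add_mul_sq_le {r s c : ℝ} (hr : 0 ≤ r) (hrs : r < s)
    (hc : 1 - (s - r) ^ 2 < c) :
    ∃ t, 0 ≤ t ∧ 1 + (exp t - 1) * r ^ 2 + (exp (-t) - 1) * s ^ 2 ≤ c := by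
  have hs : 0 < s := hr.trans_lt hrs
  set δ := c - (1 - (s - r) ^ 2)
  set ε := min (s - r) (δ / s)
  have hε : 0 < ε := lt_min (by linarith) (div_pos (by linarith) hs)
  have hεs : s * ε ≤ δ := (le_div_iff₀' hs).mp (min_le_right _ _)
  have hrε : 0 < r + ε := by positivity
  refine ⟨log (s / (r + ε)), log_nonneg ?_, ?_⟩
  · rw [le_div_iff₀ hrε]
    linarith [min_le_left (s - r) (δ / s)]
  rw [exp_neg, exp_log (by positivity), inv_div]
  -- at `exp t = s / (r + ε)` the two exponential terms are `s (r + ε)` and at most `r s`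
  have hb : s / (r + ε) * r ^ 2 ≤ r * s := by
    rw [div_mul_eq_mul_div, div_le_iff₀ hrε]
    nlinarith [mul_nonneg hr hs.le]
  have ha : (r + ε) / s * s ^ 2 = (r + ε) * s := by field_simp
  nlinarith

section Chernoff

variable {Ω : Type*} [MeasurableSpace Ω] {P : Measure Ω}

theorem integrable_exp_mul_comp {α : Type*} [Finite α] [MeasurableSpace α]
    [MeasurableSingletonClass α] [IsFiniteMeasure P] {Y : Ω → α} (hY : Measurable Y)
    (f : α → ℝ) (t : ℝ) : Integrable (fun ω => exp (t * f (Y ω))) P :=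
  (Integrable.of_finite (μ := P.map Y) (f := fun k => exp (t * f k))).comp_measurable hY

theorem mgf_comp_eq_sum {α : Type*} [Fintype α] [MeasurableSpace α]
    [MeasurableSingletonClass α] [IsFiniteMeasure P] {Y : Ω → α} (hY : Measurable Y)
    {p : α → ℝ} (hp : ∀ k, 0 ≤ p k) (hlaw : ∀ k, P {ω | Y ω = k} = ENNReal.ofReal (p k))
    (f : α → ℝ) (t : ℝ) :
    mgf (fun ω => f (Y ω)) P t = ∑ k, p k * exp (t * f k) := by
  calc mgf (fun ω => f (Y ω)) P t = ∫ k, exp (t * f k) ∂(P.map Y) :=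
        (integral_map hY.aemeasurable (f := fun k => exp (t * f k))
          (measurable_of_finite _).aestronglyMeasurable).symm
    _ = ∑ k, (P.map Y).real {k} • exp (t * f k) := integral_fintype .of_finite
    _ = ∑ k, p k * exp (t * f k) := by
        refine sum_congr rfl fun k _ => ?_
        rw [map_measureReal_apply hY (measurableSet_singleton k), measureReal_def]
        change (P {ω | Y ω = k}).toReal • _ = _
        rw [hlaw k, ENNReal.toReal_ofReal (hp k), smul_eq_mul]

theorem measureReal_sum_nonneg_le_pow_of_iIndepFun [IsProbabilityMeasure P] {ι : Type*}
    [Fintype ι] {X : ι → Ω → ℝ} (hX : ∀ i, Measurable (X i)) (hindep : iIndepFun X P)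
    {t m : ℝ} (ht : 0 ≤ t) (hint : ∀ i, Integrable (fun ω => exp (t * X i ω)) P)
    (hm : ∀ i, mgf (X i) P t = m) :
    P.real {ω | 0 ≤ ∑ i, X i ω} ≤ m ^ Fintype.card ι := by
  have hchernoff := measure_ge_le_exp_mul_mgf (μ := P) (X := ∑ i, X i) 0 ht
    (hindep.integrable_exp_mul_sum hX fun i _ => hint i)
  simpa [hindep.mgf_sum hX, hm, Finset.sum_apply] using hchernoff

end Chernoff

theorem sum_mul_exp_single_sub_single {α : Type*} [Fintype α] [DecidableEq α] {p : α → ℝ}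
    (hsum : ∑ k, p k = 1) {a b : α} (hab : a ≠ b) (t : ℝ) :
    ∑ k, p k * exp (t * (Pi.single b 1 - Pi.single a 1 : α → ℝ) k)
      = 1 + (exp t - 1) * p b + (exp (-t) - 1) * p a := by
  have hexp : ∀ k, exp (t * (Pi.single b 1 - Pi.single a 1 : α → ℝ) k)
      = 1 + (exp t - 1) * (Pi.single b 1 : α → ℝ) k
        + (exp (-t) - 1) * (Pi.single a 1 : α → ℝ) k := by
    intro k
    by_cases hkb : k = b <;> by_cases hka : k = a <;> simp_all
  simp only [hexp, mul_add, mul_one, sum_add_distrib, hsum, Pi.single_apply,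
    mul_ite, mul_zero, sum_ite_eq', mem_univ, ite_true]
  ring

/-- Chernoff bound for comparing multinomial counts: if C₁,…,C_N are i.i.d. draws from
a K-category distribution with Pr(C_u = k) = p_k and p_a > p_b, then the probability
that the count of category a is at most the count of category b is at most
exp(-N (√p_a - √p_b)²). -/
theorem stmt3 {Ω : Type*} [MeasurableSpace Ω] (P : Measure Ω) [IsProbabilityMeasure P]
    (K N : ℕ) (p : Fin K → ℝ) (hp : ∀ k, 0 ≤ p k) (hsum : ∑ k, p k = 1)
    (C : Fin N → Ω → Fin K) (hmeas : ∀ u, Measurable (C u))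
    (hindep : iIndepFun C P)
    (hdist : ∀ (u : Fin N) (k : Fin K), P {ω : Ω | C u ω = k} = ENNReal.ofReal (p k))
    (a b : Fin K) (hab : a ≠ b) (h : p b < p a) :
    P {ω : Ω | (Finset.univ.filter (fun u => C u ω = a)).card
        ≤ (Finset.univ.filter (fun u => C u ω = b)).card}
      ≤ ENNReal.ofReal
          (Real.exp (-(N : ℝ) * (Real.sqrt (p a) - Real.sqrt (p b)) ^ 2)) := by
  set D := (√(p a) - √(p b)) ^ 2
  have hD : 1 - D < exp (-D) := by
    have hD0 : -D ≠ 0 := neg_ne_zero.mpr (pow_ne_zero 2 (sub_ne_zero.mpr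
      (sqrt_lt_sqrt (hp b) h).ne'))
    linarith [add_one_lt_exp hD0]
  obtain ⟨t, ht, hm⟩ := exists_nonneg_one_add_mul_sq_le (sqrt_nonneg _)
    (sqrt_lt_sqrt (hp b) h) hD
  rw [sq_sqrt (hp b), sq_sqrt (hp a)] at hm
  set f : Fin K → ℝ := Pi.single b 1 - Pi.single a 1
  have hmgf : ∀ u, mgf (fun ω => f (C u ω)) P t = ∑ k, p k * exp (t * f k) :=
    fun u => mgf_comp_eq_sum (hmeas u) hp (hdist u) f t
  have hm0 : 0 ≤ ∑ k, p k * exp (t * f k) :=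
    sum_nonneg fun k _ => mul_nonneg (hp k) (exp_pos _).le
  have hchernoff := measureReal_sum_nonneg_le_pow_of_iIndepFun
    (fun u => (measurable_of_finite f).comp (hmeas u))
    (hindep.comp (fun _ => f) fun _ => measurable_of_finite f) ht
    (fun u => integrable_exp_mul_comp (hmeas u) f t) hmgf
  have hevent : {ω | #{u | C u ω = a} ≤ #{u | C u ω = b}} = {ω | 0 ≤ ∑ u, f (C u ω)} := by
    ext ω
    simp [f, Pi.single_apply, sum_sub_distrib, sum_boole]
  rw [hevent, ← ofReal_measureReal]
  gcongr
  calc P.real {ω | 0 ≤ ∑ u, f (C u ω)} ≤ (∑ k, p k * exp (t * f k)) ^ N := by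
        simpa using hchernoff
    _ ≤ exp (-D) ^ N := by
        gcongr
        rwa [sum_mul_exp_single_sub_single hsum hab]
    _ = exp (-N * D) := by rw [← exp_nat_mul]; ring_nf
end

section
/- Let C₁, …, C_N be i.i.d. with values in {1, …, K}, Pr(C_u = k) = p_k, and counts C̃_k^(N). If p_1 > p_k for all k = 2, …, K, then Pr(C̃_1^(N) > C̃_k^(N) for all k ≥ 2) ≥ 1 - Σ_{k=2}^K exp(-N·(√p_1 - √p_k)²). -/
open MeasureTheory ProbabilityTheory Finset

/-!
For `k ≠ k₁` the difference of counts `C̃_k - C̃_{k₁}` is a sum of `N` independent copies of a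
variable with values `1, -1, 0` taken with probabilities `p_k, p_{k₁}, 1 - p_k - p_{k₁}`. The
Chernoff bound gives `P(C̃_{k₁} ≤ C̃_k) ≤ M(t)^N` for every `t ≥ 0`, where
`M(t) = p_k e^t + p_{k₁} e^{-t} + 1 - p_k - p_{k₁}`; at `e^t = √(p_{k₁}/p_k)` this is
`1 - (√p_{k₁} - √p_k)² ≤ exp (-(√p_{k₁} - √p_k)²)`. A union bound over `k ≠ k₁` finishes.
-/

theorem exists_chernoff_exponent {q p : ℝ} (hq : 0 ≤ q) (hqp : q < p) :
    ∃ t : ℝ, 0 ≤ t ∧ q * Real.exp t + p * Real.exp (-t) + (1 - q - p)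
      ≤ Real.exp (-(Real.sqrt p - Real.sqrt q) ^ 2) := by
  have hp : 0 < p := hq.trans_lt hqp
  rcases hq.eq_or_lt with rfl | hq
  -- for `q = 0` the infimum `1 - p` of the left side is not attained, but `1 - p < exp (-p)`
  · set δ := Real.exp (-p) - (1 - p)
    have hδ : 0 < δ := sub_pos.2 <| by
      linarith [Real.add_one_lt_exp (neg_ne_zero.mpr hp.ne')]
    have hδp : δ ≤ p := by linarith [Real.exp_le_one_iff.mpr (neg_nonpos.mpr hp.le)]
    refine ⟨Real.log (p / δ), Real.log_nonneg ((one_le_div hδ).mpr hδp), ?_⟩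
    rw [Real.exp_neg, Real.exp_log (by positivity), Real.sqrt_zero, sub_zero, sub_zero,
      Real.sq_sqrt hp.le]
    field_simp
    exact le_of_eq (by ring)
  · set a := Real.sqrt p
    set b := Real.sqrt q
    have hb : 0 < b := Real.sqrt_pos.mpr hq
    have hba : b < a := Real.sqrt_lt_sqrt hq.le hqp
    refine ⟨Real.log (a / b), Real.log_nonneg ((one_le_div hb).mpr hba.le), ?_⟩
    have hq' : q = b ^ 2 := (Real.sq_sqrt hq.le).symm
    have hp' : p = a ^ 2 := (Real.sq_sqrt hp.le).symm
    calc q * Real.exp (Real.log (a / b)) + p * Real.exp (-Real.log (a / b)) + (1 - q - p)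
        = 1 - (a - b) ^ 2 := by
          rw [Real.exp_neg, Real.exp_log (by positivity), hq', hp']
          field_simp
          ring
      _ ≤ _ := by linarith [Real.add_one_le_exp (-(a - b) ^ 2)]

section Chernoff

variable {Ω ι α : Type*} [MeasurableSpace Ω] {P : Measure Ω}
  [Fintype α] [MeasurableSpace α] [MeasurableSingletonClass α]

theorem mgf_comp_eq_sum_s4 [IsFiniteMeasure P] {Y : Ω → α} (hY : Measurable Y) (g : α → ℝ) (t : ℝ) :
    mgf (g ∘ Y) P t = ∑ j, P.real (Y ⁻¹' {j}) * Real.exp (t * g j) := by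
  rw [← mgf_map hY.aemeasurable (measurable_of_finite _).aestronglyMeasurable, mgf,
    integral_fintype .of_finite]
  simp [map_measureReal_apply hY (measurableSet_singleton _)]

theorem measureReal_sum_comp_nonneg_le [IsProbabilityMeasure P] [Fintype ι] {Y : ι → Ω → α}
    (hY : ∀ i, Measurable (Y i)) (hindep : iIndepFun Y P) {q : α → ℝ}
    (hlaw : ∀ i j, P.real (Y i ⁻¹' {j}) = q j) (g : α → ℝ) {t : ℝ} (ht : 0 ≤ t) :
    P.real {ω | 0 ≤ ∑ i, g (Y i ω)} ≤ (∑ j, q j * Real.exp (t * g j)) ^ Fintype.card ι := by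
  have hg : Measurable g := measurable_of_finite g
  have hX : iIndepFun (fun i => g ∘ Y i) P := hindep.comp _ fun _ => hg
  have hint : Integrable (fun ω => Real.exp (t * (∑ i, g ∘ Y i) ω)) P :=
    hX.integrable_exp_mul_sum (fun i => hg.comp (hY i)) fun i _ =>
      (Integrable.of_finite (f := fun j => Real.exp (t * g j))).comp_measurable (hY i)
  calc P.real {ω | 0 ≤ ∑ i, g (Y i ω)} = P.real {ω | 0 ≤ (∑ i, g ∘ Y i) ω} := by
        simp [Finset.sum_apply]
    _ ≤ mgf (∑ i, g ∘ Y i) P t := by simpa using measure_ge_le_exp_mul_mgf 0 ht hint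
    _ = _ := by
        simp [hX.mgf_sum (fun i => hg.comp (hY i)), mgf_comp_eq_sum_s4 (hY _), hlaw]

end Chernoff

theorem sum_mul_exp_mul_indicator_sub {K : Type*} [Fintype K] [DecidableEq K] {p : K → ℝ}
    (hsum : ∑ k, p k = 1) {k k₁ : K} (hk : k ≠ k₁) (t : ℝ) :
    ∑ j, p j * Real.exp (t * ((if j = k then 1 else 0) - if j = k₁ then 1 else 0))
      = p k * Real.exp t + p k₁ * Real.exp (-t) + (1 - p k - p k₁) := by
  have hterm : ∀ j, p j * Real.exp (t * ((if j = k then 1 else 0) - if j = k₁ then 1 else 0))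
      = p j + (if j = k then p j * (Real.exp t - 1) else 0)
        + (if j = k₁ then p j * (Real.exp (-t) - 1) else 0) := by
    intro j
    by_cases hjk : j = k
    · subst hjk; simp only [↓reduceIte, hk, sub_zero, mul_one, add_zero]; ring
    by_cases hjk₁ : j = k₁
    · subst hjk₁; simp only [hjk, ↓reduceIte, zero_sub, mul_neg, mul_one, add_zero]; ring
    simp [hjk, hjk₁]
  simp only [hterm, sum_add_distrib, sum_ite_eq', mem_univ, if_true, hsum]
  ring

theorem measure_card_filter_le_card_filter_le {Ω : Type*} [MeasurableSpace Ω] (P : Measure Ω)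
    [IsProbabilityMeasure P] {K N : ℕ} {p : Fin K → ℝ} (hp : ∀ k, 0 ≤ p k)
    (hsum : ∑ k, p k = 1) {C : Fin N → Ω → Fin K} (hmeas : ∀ u, Measurable (C u))
    (hindep : iIndepFun C P)
    (hdist : ∀ (u : Fin N) (k : Fin K), P {ω : Ω | C u ω = k} = ENNReal.ofReal (p k))
    {k k₁ : Fin K} (hk : k ≠ k₁) (hlt : p k < p k₁) :
    P {ω | #{u | C u ω = k₁} ≤ #{u | C u ω = k}}
      ≤ ENNReal.ofReal (Real.exp (-(N : ℝ) * (Real.sqrt (p k₁) - Real.sqrt (p k)) ^ 2)) := by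
  obtain ⟨t, ht, hM⟩ := exists_chernoff_exponent (hp k) hlt
  set g : Fin K → ℝ := fun j => (if j = k then 1 else 0) - if j = k₁ then 1 else 0
  have hlaw : ∀ u j, P.real (C u ⁻¹' {j}) = p j := fun u j => by
    simp only [measureReal_def, Set.preimage, Set.mem_singleton_iff, hdist,
      ENNReal.toReal_ofReal (hp j)]
  have hevent : {ω | #{u | C u ω = k₁} ≤ #{u | C u ω = k}} = {ω | 0 ≤ ∑ u, g (C u ω)} := by
    ext ω
    simp only [Set.mem_ofPred_eq, g, sum_sub_distrib, ← natCast_card_filter, sub_nonneg,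
      Nat.cast_le]
  rw [← ofReal_measureReal, hevent]
  refine ENNReal.ofReal_le_ofReal ?_
  calc P.real {ω | 0 ≤ ∑ u, g (C u ω)} ≤ (∑ j, p j * Real.exp (t * g j)) ^ N := by
        simpa using measureReal_sum_comp_nonneg_le hmeas hindep hlaw g ht
    _ ≤ Real.exp (-(Real.sqrt (p k₁) - Real.sqrt (p k)) ^ 2) ^ N := by
        refine pow_le_pow_left₀ (sum_nonneg fun j _ => mul_nonneg (hp j) (Real.exp_pos _).le) ?_ N
        rwa [sum_mul_exp_mul_indicator_sub hsum hk]
    _ = _ := by rw [← Real.exp_nat_mul]; ring_nf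

/-- Lower bound for majority voting: if category k₁ is the unique mode of the sampling
distribution, then the probability that its count strictly exceeds every other count is
at least 1 - Σ_{k ≠ k₁} exp(-N (√p_{k₁} - √p_k)²). -/
theorem stmt4 {Ω : Type*} [MeasurableSpace Ω] (P : Measure Ω) [IsProbabilityMeasure P]
    (K N : ℕ) (p : Fin K → ℝ) (hp : ∀ k, 0 ≤ p k) (hsum : ∑ k, p k = 1)
    (C : Fin N → Ω → Fin K) (hmeas : ∀ u, Measurable (C u))
    (hindep : iIndepFun C P)
    (hdist : ∀ (u : Fin N) (k : Fin K), P {ω : Ω | C u ω = k} = ENNReal.ofReal (p k))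
    (k₁ : Fin K) (hmode : ∀ k : Fin K, k ≠ k₁ → p k < p k₁) :
    1 - ENNReal.ofReal (∑ k ∈ Finset.univ.erase k₁,
          Real.exp (-(N : ℝ) * (Real.sqrt (p k₁) - Real.sqrt (p k)) ^ 2))
      ≤ P {ω : Ω | ∀ k : Fin K, k ≠ k₁ →
          (Finset.univ.filter (fun u => C u ω = k)).card
            < (Finset.univ.filter (fun u => C u ω = k₁)).card} := by
  set E := {ω : Ω | ∀ k : Fin K, k ≠ k₁ → #{u | C u ω = k} < #{u | C u ω = k₁}}
  have hcompl : Eᶜ ⊆ ⋃ k ∈ univ.erase k₁, {ω | #{u | C u ω = k₁} ≤ #{u | C u ω = k}} := by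
    intro ω hω
    obtain ⟨k, hk, hle⟩ : ∃ k, k ≠ k₁ ∧ #{u | C u ω = k₁} ≤ #{u | C u ω = k} := by
      simpa [E] using hω
    exact Set.mem_biUnion (mem_erase.mpr ⟨hk, mem_univ k⟩) hle
  have hEc : P Eᶜ ≤ ENNReal.ofReal (∑ k ∈ univ.erase k₁,
      Real.exp (-(N : ℝ) * (Real.sqrt (p k₁) - Real.sqrt (p k)) ^ 2)) := by
    rw [ENNReal.ofReal_sum_of_nonneg fun k _ => (Real.exp_pos _).le]
    calc P Eᶜ ≤ _ := measure_mono hcompl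
      _ ≤ _ := measure_biUnion_finset_le _ _
      _ ≤ _ := sum_le_sum fun k hk =>
          measure_card_filter_le_card_filter_le P hp hsum hmeas hindep hdist
            (mem_erase.mp hk).1 (hmode k (mem_erase.mp hk).1)
  calc 1 - _ ≤ 1 - P Eᶜ := tsub_le_tsub_left hEc 1
    _ ≤ P E := by
        rw [tsub_le_iff_right, ← measure_univ (μ := P), ← Set.union_compl_self E]
        exact measure_union_le E Eᶜ
end

section
/- Let C₁, …, C_N be i.i.d. with values in {1, …, K} with Pr(C_u = k) = p_k, and counts C̃_k^(N). If p_k > p_1 for some k ∈ {2, …, K}, then Pr(C̃_1^(N) ≥ C̃_j^(N) for all j ≥ 2) ≤ exp(-N·(√p_k - √p_1)²). -/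
open MeasureTheory ProbabilityTheory Finset Real

/-!
On the event, `k₁` occurs at least as often as `k`, so the sum of the independent variables
`X u = 1[C u = k₁] - 1[C u = k]` is nonnegative. By the Chernoff bound its probability is at
most `M(t) ^ N`, where `M(t) = p k₁ eᵗ + p k e⁻ᵗ + 1 - p k₁ - p k` is the common mgf. At
`eᵗ = √(p k / p k₁)` one gets `M(t) = 1 - (√(p k) - √(p k₁))² ≤ exp (-(√(p k) - √(p k₁))²)`;
if `p k₁ = 0` the infimum `1 - p k < exp (-p k)` is not attained but is approached as `t → ∞`.
-/

/-- The mgf of a random variable equal to `1`, `-1`, `0` with probabilities `q`, `r`,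
`1 - q - r`. -/
noncomputable def trinomialMgf (q r t : ℝ) : ℝ := q * exp t + r * exp (-t) + (1 - q - r)

lemma trinomialMgf_nonneg {q r : ℝ} (hq : 0 ≤ q) (hr : 0 ≤ r) (hqr : q + r ≤ 1) (t : ℝ) :
    0 ≤ trinomialMgf q r t := by
  unfold trinomialMgf
  have := exp_pos t
  have := exp_pos (-t)
  nlinarith

lemma trinomialMgf_sq_sq_log_div {a b : ℝ} (ha : 0 < a) (hb : 0 < b) :
    trinomialMgf (a ^ 2) (b ^ 2) (log (b / a)) = 1 - (b - a) ^ 2 := by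
  rw [trinomialMgf, exp_neg, exp_log (div_pos hb ha)]
  field_simp
  ring

lemma exists_trinomialMgf_zero_le {r : ℝ} (hr : 0 < r) :
    ∃ t, 0 ≤ t ∧ trinomialMgf 0 r t ≤ exp (-r) := by
  -- `e⁻ᵗ = c / r` makes the value exactly `exp (-r)`
  set c := exp (-r) - (1 - r)
  have hc_pos : 0 < c := by linarith [add_one_lt_exp (x := -r) (by linarith)]
  have hc_le : c ≤ r := by linarith [exp_le_one_iff.2 (neg_nonpos.2 hr.le)]
  refine ⟨log (r / c), log_nonneg ((one_le_div hc_pos).2 hc_le), le_of_eq ?_⟩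
  rw [trinomialMgf, exp_neg, exp_log (div_pos hr hc_pos)]
  field_simp
  ring

lemma exists_trinomialMgf_le {q r : ℝ} (hq : 0 ≤ q) (hqr : q < r) :
    ∃ t, 0 ≤ t ∧ trinomialMgf q r t ≤ exp (-(√r - √q) ^ 2) := by
  have hr : 0 < r := hq.trans_lt hqr
  rcases hq.eq_or_lt with rfl | hq
  · simpa [sq_sqrt hr.le] using exists_trinomialMgf_zero_le hr
  · refine ⟨log (√r / √q), log_nonneg ?_, ?_⟩
    · exact (one_le_div (sqrt_pos.2 hq)).2 (sqrt_le_sqrt hqr.le)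
    · have := trinomialMgf_sq_sq_log_div (sqrt_pos.2 hq) (sqrt_pos.2 hr)
      rw [sq_sqrt hq.le, sq_sqrt hr.le] at this
      rw [this]
      linarith [add_one_le_exp (-(√r - √q) ^ 2)]

section Mgf

variable {Ω : Type*} [MeasurableSpace Ω] {P : Measure Ω}

lemma mgf_comp_of_fintype {α : Type*} [Fintype α] [MeasurableSpace α]
    [MeasurableSingletonClass α] [IsFiniteMeasure P] {Y : Ω → α} (hY : Measurable Y)
    (g : α → ℝ) (t : ℝ) :
    mgf (g ∘ Y) P t = ∑ a, P.real (Y ⁻¹' {a}) * exp (t * g a) := by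
  rw [← mgf_map hY.aemeasurable (measurable_of_countable _).aestronglyMeasurable, mgf,
    integral_fintype Integrable.of_finite]
  simp [measureReal_def, Measure.map_apply hY (measurableSet_singleton _)]

lemma mgf_ite_sub_ite_comp {α : Type*} [Fintype α] [DecidableEq α] [MeasurableSpace α]
    [MeasurableSingletonClass α] [IsFiniteMeasure P] {Y : Ω → α} (hY : Measurable Y)
    {p : α → ℝ} (hlaw : ∀ a, P.real (Y ⁻¹' {a}) = p a) (hsum : ∑ a, p a = 1)
    {a b : α} (hab : a ≠ b) (t : ℝ) :
    mgf ((fun x => (if x = a then 1 else 0) - (if x = b then 1 else 0)) ∘ Y) P t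
      = trinomialMgf (p a) (p b) t := by
  have hexp : ∀ x, exp (t * ((if x = a then 1 else 0) - (if x = b then 1 else 0)))
      = 1 + (if x = a then exp t - 1 else 0) + (if x = b then exp (-t) - 1 else 0) := by
    intro x
    by_cases hxa : x = a
    · subst hxa; simp [hab]
    · by_cases hxb : x = b
      · subst hxb; simp [hab.symm]
      · simp [hxa, hxb]
  simp only [mgf_comp_of_fintype hY, hlaw, hexp, mul_add, mul_one, mul_ite, mul_zero,
    sum_add_distrib, hsum, sum_ite_eq', mem_univ, if_true, trinomialMgf]
  ring

lemma measureReal_sum_nonneg_le_pow {ι : Type*} [IsProbabilityMeasure P]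
    {X : ι → Ω → ℝ} (hindep : iIndepFun X P) (hX : ∀ i, Measurable (X i)) (s : Finset ι)
    {t M : ℝ} (ht : 0 ≤ t) (hint : ∀ i ∈ s, Integrable (fun ω => exp (t * X i ω)) P)
    (hmgf : ∀ i ∈ s, mgf (X i) P t = M) :
    P.real {ω | 0 ≤ ∑ i ∈ s, X i ω} ≤ M ^ #s := by
  have := measure_ge_le_exp_mul_mgf 0 ht (hindep.integrable_exp_mul_sum hX hint)
  simpa [hindep.mgf_sum hX, prod_congr rfl hmgf] using this

end Mgf

/-- Upper bound for majority voting: if some category k beats category k₁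
(p_k > p_{k₁}), then the probability that the count of k₁ weakly dominates all other
counts is at most exp(-N (√p_k - √p_{k₁})²). -/
theorem stmt5 {Ω : Type*} [MeasurableSpace Ω] (P : Measure Ω) [IsProbabilityMeasure P]
    (K N : ℕ) (p : Fin K → ℝ) (hp : ∀ k, 0 ≤ p k) (hsum : ∑ k, p k = 1)
    (C : Fin N → Ω → Fin K) (hmeas : ∀ u, Measurable (C u))
    (hindep : iIndepFun C P)
    (hdist : ∀ (u : Fin N) (k : Fin K), P {ω : Ω | C u ω = k} = ENNReal.ofReal (p k))
    (k₁ k : Fin K) (hk : k ≠ k₁) (hbeat : p k₁ < p k) :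
    P {ω : Ω | ∀ j : Fin K, j ≠ k₁ →
          (Finset.univ.filter (fun u => C u ω = j)).card
            ≤ (Finset.univ.filter (fun u => C u ω = k₁)).card}
      ≤ ENNReal.ofReal
          (Real.exp (-(N : ℝ) * (Real.sqrt (p k) - Real.sqrt (p k₁)) ^ 2)) := by
  obtain ⟨t, ht, hbound⟩ := exists_trinomialMgf_le (hp k₁) hbeat
  set g : Fin K → ℝ := fun j => (if j = k₁ then 1 else 0) - (if j = k then 1 else 0)
  have hlaw : ∀ u j, P.real (C u ⁻¹' {j}) = p j := fun u j => by
    simp only [measureReal_def, Set.preimage, Set.mem_singleton_iff, hdist,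
      ENNReal.toReal_ofReal (hp j)]
  have hmgf : ∀ u ∈ univ, mgf (g ∘ C u) P t = trinomialMgf (p k₁) (p k) t := fun u _ =>
    mgf_ite_sub_ite_comp (hmeas u) (hlaw u) hsum hk.symm t
  have hint : ∀ u ∈ univ, Integrable (fun ω => Real.exp (t * (g ∘ C u) ω)) P := fun u _ =>
    (Integrable.of_finite (f := fun j => Real.exp (t * g j))).comp_measurable (hmeas u)
  have hchernoff := measureReal_sum_nonneg_le_pow
    (hindep.comp (fun _ => g) fun _ => measurable_of_countable g)
    (fun u => (measurable_of_countable g).comp (hmeas u)) univ ht hint hmgf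
  have hsub : {ω : Ω | ∀ j : Fin K, j ≠ k₁ →
          (Finset.univ.filter (fun u => C u ω = j)).card
            ≤ (Finset.univ.filter (fun u => C u ω = k₁)).card}
      ⊆ {ω | 0 ≤ ∑ u, (g ∘ C u) ω} := fun ω hω => by
    have : (#(univ.filter fun u => C u ω = k) : ℝ) ≤ #(univ.filter fun u => C u ω = k₁) := by
      exact_mod_cast hω k hk
    simpa [g, sum_sub_distrib, sum_boole] using this
  rw [ENNReal.le_ofReal_iff_toReal_le (measure_ne_top _ _) (exp_nonneg _)]
  calc (P _).toReal ≤ P.real {ω | 0 ≤ ∑ u, (g ∘ C u) ω} := measureReal_mono hsub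
    _ ≤ trinomialMgf (p k₁) (p k) t ^ N := by simpa using hchernoff
    _ ≤ exp (-(√(p k) - √(p k₁)) ^ 2) ^ N := by
      gcongr
      exact trinomialMgf_nonneg (hp k₁) (hp k)
        (hsum ▸ add_le_sum (fun j _ => hp j) (mem_univ _) (mem_univ _) hk.symm) t
    _ = exp (-N * (√(p k) - √(p k₁)) ^ 2) := by rw [← exp_nat_mul, mul_neg, neg_mul]
end

section
/- Let Ũ_k^(N) = Σ_{u=1}^N S_{k,u}·1{C_u = k} where C_u are i.i.d. K-category draws with Pr(C_u = k) = p_k and S_{k,u} ~ N(μ_k, σ_k²) are independent Gaussian scores. If p_a·μ_a > p_b·μ_b, then Pr(Ũ_a^(N) ≤ Ũ_b^(N)) ≤ inf_{t>0} exp( N·p_a·(e^{-tμ_a + t²σ_a²/2} − 1) + N·p_b·(e^{tμ_b + t²σ_b²/2} − 1) ). -/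
open MeasureTheory ProbabilityTheory Real Finset Classical

/-- Index family for joint independence of the category draws (left) and the Gaussian
scores (right). -/
def mixType (K N : ℕ) : Fin N ⊕ (Fin K × Fin N) → Type :=
  fun i => Sum.elim (fun _ => Fin K) (fun _ => ℝ) i

noncomputable instance (K N : ℕ) (i : Fin N ⊕ (Fin K × Fin N)) :
    MeasurableSpace (mixType K N i) := by
  cases i with
  | inl _ => exact inferInstanceAs (MeasurableSpace (Fin K))
  | inr _ => exact inferInstanceAs (MeasurableSpace ℝ)

/-! Write `D_u = S_{b,u}·1{C_u = b} - S_{a,u}·1{C_u = a}`, so that the event is `0 ≤ Σ_u D_u`.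
Since `C_u` is independent of the scores, `E[exp (t D_u)] = 1 + p_a (M_a(-t) - 1) +
p_b (M_b(t) - 1)` with the Gaussian moment generating functions `M_k(s) = exp (s μ_k + s² σ_k² / 2)`.
Different `D_u` are functions of disjoint blocks of the independent family, so the moment
generating function of the sum is the product of these factors; Markov's inequality for
`exp (t Σ_u D_u)` and `1 + x ≤ exp x` give the bound for every `t > 0`. -/

open scoped NNReal

lemma integrable_exp_mul_of_map_eq_gaussianReal {Ω : Type*} {mΩ : MeasurableSpace Ω}
    {P : Measure Ω} [IsProbabilityMeasure P] {S : Ω → ℝ} {m : ℝ} {v : ℝ≥0}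
    (hS : P.map S = gaussianReal m v) (t : ℝ) :
    Integrable (fun ω => exp (t * S ω)) P :=
  mgf_pos_iff.1 (by rw [mgf_gaussianReal hS]; positivity)

lemma measureReal_sum_nonneg_le_exp_sum_mgf_sub_one {Ω ι : Type*} {mΩ : MeasurableSpace Ω}
    {μ : Measure Ω} [IsProbabilityMeasure μ] {X : ι → Ω → ℝ} {s : Finset ι} {t : ℝ}
    (ht : 0 ≤ t) (hint : ∀ i ∈ s, Integrable (fun ω => exp (t * X i ω)) μ)
    (hmgf : mgf (∑ i ∈ s, X i) μ t = ∏ i ∈ s, mgf (X i) μ t) :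
    μ.real {ω | 0 ≤ (∑ i ∈ s, X i) ω} ≤ exp (∑ i ∈ s, (mgf (X i) μ t - 1)) := by
  have hint_sum : Integrable (fun ω => exp (t * (∑ i ∈ s, X i) ω)) μ :=
    mgf_pos_iff.1 (hmgf ▸ Finset.prod_pos fun i hi => mgf_pos (hint i hi))
  calc μ.real {ω | 0 ≤ (∑ i ∈ s, X i) ω}
      ≤ exp (-t * 0) * mgf (∑ i ∈ s, X i) μ t := measure_ge_le_exp_mul_mgf 0 ht hint_sum
    _ = ∏ i ∈ s, mgf (X i) μ t := by rw [hmgf]; simp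
    _ ≤ ∏ i ∈ s, exp (mgf (X i) μ t - 1) :=
      Finset.prod_le_prod (fun _ _ => mgf_nonneg) fun i _ => by
        linarith [add_one_le_exp (mgf (X i) μ t - 1)]
    _ = exp (∑ i ∈ s, (mgf (X i) μ t - 1)) := (exp_sum _ _).symm

section BlockIndependence

variable {Ω ι J : Type*} {mΩ : MeasurableSpace Ω} {μ : Measure Ω} {m : ι → MeasurableSpace Ω}

lemma ProbabilityTheory.iIndep.indepFun_of_measurable_iSup {β γ : Type*} [MeasurableSpace β]
    [MeasurableSpace γ] (h : iIndep m μ) (h_le : ∀ i, m i ≤ mΩ) {S T : Set ι} (hST : Disjoint S T)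
    {X : Ω → β} {Y : Ω → γ} (hX : Measurable[⨆ i ∈ S, m i] X) (hY : Measurable[⨆ i ∈ T, m i] Y) :
    IndepFun X Y μ := by
  rw [IndepFun_iff_Indep]
  exact indep_of_indep_of_le (indep_iSup_of_disjoint h_le h hST) hX.comap_le hY.comap_le

lemma ProbabilityTheory.iIndep.mgf_sum_of_measurable_blocks (h : iIndep m μ)
    (h_le : ∀ i, m i ≤ mΩ) (blk : ι → J) {X : J → Ω → ℝ}
    (hX : ∀ j, Measurable[⨆ i ∈ blk ⁻¹' {j}, m i] (X j)) (t : ℝ) (s : Finset J) :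
    mgf (∑ j ∈ s, X j) μ t = ∏ j ∈ s, mgf (X j) μ t := by
  classical
  have := h.isProbabilityMeasure
  induction s using Finset.induction_on with
  | empty => simp
  | insert j s hj ih =>
    have hsum : Measurable[⨆ i ∈ blk ⁻¹' s, m i] (∑ v ∈ s, X v) := by
      rw [Finset.sum_fn]
      exact Finset.measurable_sum s fun v hv =>
        (hX v).mono (biSup_mono fun i hi => show blk i ∈ s from Set.mem_singleton_iff.1 hi ▸ hv)
          le_rfl
    have hind : IndepFun (X j) (∑ v ∈ s, X v) μ :=
      h.indepFun_of_measurable_iSup h_le ((Set.disjoint_singleton_left.2 hj).preimage blk) (hX j)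
        hsum
    have hle : ∀ T : Set ι, ⨆ i ∈ T, m i ≤ mΩ := fun T => iSup₂_le fun i _ => h_le i
    rw [Finset.sum_insert hj, hind.mgf_add' ((hX j).mono (hle _) le_rfl).aestronglyMeasurable
      (hsum.mono (hle _) le_rfl).aestronglyMeasurable, ih, Finset.prod_insert hj]

end BlockIndependence

section IndicatorMGF

variable {Ω β : Type*} [MeasurableSpace Ω] [MeasurableSpace β] [MeasurableSingletonClass β]
  {P : Measure Ω} [IsProbabilityMeasure P] {C : Ω → β} {S : Ω → ℝ} {t : ℝ}

lemma setIntegral_exp_mul_sub_one_of_indepFun (hC : Measurable C) (hS : Measurable S)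
    (hCS : IndepFun C S P) (hint : Integrable (fun ω => exp (t * S ω)) P) (k : β) :
    ∫ ω in {ω | C ω = k}, (exp (t * S ω) - 1) ∂P = P.real {ω | C ω = k} * (mgf S P t - 1) := by
  rw [Indep.setIntegral_eq_mul (A := {ω | C ω = k}) (f := fun x => exp (t * x) - 1) hC.comap_le hCS
    hS.aemeasurable ⟨{k}, measurableSet_singleton k, rfl⟩
    (by fun_prop), integral_sub hint (integrable_const 1), integral_const, mgf]
  simp

lemma integrable_indicator_exp_mul_sub_one (hC : Measurable C)
    (hint : Integrable (fun ω => exp (t * S ω)) P) (k : β) :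
    Integrable ({ω | C ω = k}.indicator (fun ω => exp (t * S ω) - 1)) P :=
  (hint.sub (integrable_const 1)).indicator (hC (measurableSet_singleton k))

end IndicatorMGF

section ScoreGap

variable {Ω β : Type*} [DecidableEq β] {C : Ω → β} {a b : β} {Sa Sb : Ω → ℝ}

def scoreGap (C : Ω → β) (a b : β) (Sa Sb : Ω → ℝ) (ω : Ω) : ℝ :=
  (if C ω = b then Sb ω else 0) - (if C ω = a then Sa ω else 0)

lemma exp_mul_scoreGap (hab : a ≠ b) (t : ℝ) :
    (fun ω => exp (t * scoreGap C a b Sa Sb ω))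
      = 1 + {ω | C ω = a}.indicator (fun ω => exp (-t * Sa ω) - 1)
        + {ω | C ω = b}.indicator (fun ω => exp (t * Sb ω) - 1) := by
  ext ω
  by_cases ha : C ω = a
  · simp [scoreGap, ha, hab]
  · by_cases hb : C ω = b
    · simp [scoreGap, hb, hab.symm]
    · simp [scoreGap, ha, hb]

lemma Measurable.scoreGap [MeasurableSpace β] [MeasurableSingletonClass β] {m : MeasurableSpace Ω}
    (hC : Measurable[m] C) (hSa : Measurable[m] Sa) (hSb : Measurable[m] Sb) :
    Measurable[m] (scoreGap C a b Sa Sb) :=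
  (Measurable.ite (hC (measurableSet_singleton b)) hSb measurable_const).sub
    (Measurable.ite (hC (measurableSet_singleton a)) hSa measurable_const)

variable [MeasurableSpace Ω] [MeasurableSpace β] [MeasurableSingletonClass β]
  {P : Measure Ω} [IsProbabilityMeasure P] {t : ℝ}

lemma integrable_exp_mul_scoreGap (hab : a ≠ b) (hC : Measurable C)
    (ha : Integrable (fun ω => exp (-t * Sa ω)) P) (hb : Integrable (fun ω => exp (t * Sb ω)) P) :
    Integrable (fun ω => exp (t * scoreGap C a b Sa Sb ω)) P := by
  rw [exp_mul_scoreGap hab]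
  exact ((integrable_const 1).add (integrable_indicator_exp_mul_sub_one hC ha a)).add
    (integrable_indicator_exp_mul_sub_one hC hb b)

lemma mgf_scoreGap (hab : a ≠ b) (hC : Measurable C) (hSa : Measurable Sa) (hSb : Measurable Sb)
    (hCa : IndepFun C Sa P) (hCb : IndepFun C Sb P)
    (ha : Integrable (fun ω => exp (-t * Sa ω)) P) (hb : Integrable (fun ω => exp (t * Sb ω)) P) :
    mgf (scoreGap C a b Sa Sb) P t
      = 1 + P.real {ω | C ω = a} * (mgf Sa P (-t) - 1)
        + P.real {ω | C ω = b} * (mgf Sb P t - 1) := by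
  have hIa := integrable_indicator_exp_mul_sub_one hC ha a
  have hIb := integrable_indicator_exp_mul_sub_one hC hb b
  have h1 : Integrable (1 : Ω → ℝ) P := integrable_const 1
  rw [mgf, exp_mul_scoreGap hab, integral_add' (h1.add hIa) hIb, integral_add' h1 hIa,
    integral_indicator (s := {ω | C ω = a}) (hC (measurableSet_singleton a)),
    integral_indicator (s := {ω | C ω = b}) (hC (measurableSet_singleton b)),
    setIntegral_exp_mul_sub_one_of_indepFun hC hSa hCa ha,
    setIntegral_exp_mul_sub_one_of_indepFun hC hSb hCb hb]
  simp

lemma mgf_scoreGap_of_map_eq_gaussianReal (hab : a ≠ b) (hC : Measurable C) (hSa : Measurable Sa)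
    (hSb : Measurable Sb) (hCa : IndepFun C Sa P) (hCb : IndepFun C Sb P) {ma mb : ℝ}
    {va vb : ℝ≥0} (hga : P.map Sa = gaussianReal ma va) (hgb : P.map Sb = gaussianReal mb vb) :
    mgf (scoreGap C a b Sa Sb) P t
      = 1 + P.real {ω | C ω = a} * (exp (-t * ma + t ^ 2 * va / 2) - 1)
        + P.real {ω | C ω = b} * (exp (t * mb + t ^ 2 * vb / 2) - 1) := by
  rw [mgf_scoreGap hab hC hSa hSb hCa hCb (integrable_exp_mul_of_map_eq_gaussianReal hga _)
    (integrable_exp_mul_of_map_eq_gaussianReal hgb _), mgf_gaussianReal hga, mgf_gaussianReal hgb]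
  ring_nf

end ScoreGap

section SampleModel

variable {Ω : Type*} {K N : ℕ}

def sampleFamily (C : Fin N → Ω → Fin K) (S : Fin K → Fin N → Ω → ℝ)
    (i : Fin N ⊕ (Fin K × Fin N)) : Ω → mixType K N i :=
  Sum.rec (motive := fun i => Ω → mixType K N i) (fun u => C u) (fun ku => S ku.1 ku.2) i

def sampleOf : Fin N ⊕ (Fin K × Fin N) → Fin N := Sum.elim id Prod.snd

def sampleGap (C : Fin N → Ω → Fin K) (S : Fin K → Fin N → Ω → ℝ) (a b : Fin K) (u : Fin N) :
    Ω → ℝ :=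
  scoreGap (C u) a b (S a u) (S b u)

lemma measurable_sampleGap_iSup_comap (C : Fin N → Ω → Fin K) (S : Fin K → Fin N → Ω → ℝ)
    (a b : Fin K) (u : Fin N) :
    Measurable[⨆ i ∈ sampleOf ⁻¹' {u}, MeasurableSpace.comap (sampleFamily C S i) inferInstance]
      (sampleGap C S a b u) := by
  have hle : ∀ i ∈ sampleOf ⁻¹' {u}, MeasurableSpace.comap (sampleFamily C S i) inferInstance
      ≤ ⨆ i ∈ sampleOf ⁻¹' {u}, MeasurableSpace.comap (sampleFamily C S i) inferInstance :=
    fun i hi => le_iSup₂ (f := fun i _ => MeasurableSpace.comap (sampleFamily C S i) _) i hi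
  have hS : ∀ k, Measurable[⨆ i ∈ sampleOf ⁻¹' {u},
      MeasurableSpace.comap (sampleFamily C S i) inferInstance] (S k u) := fun k =>
    (comap_measurable (sampleFamily C S (Sum.inr (k, u)))).mono (hle _ rfl) le_rfl
  have hC : Measurable[⨆ i ∈ sampleOf ⁻¹' {u},
      MeasurableSpace.comap (sampleFamily C S i) inferInstance] (C u) :=
    (comap_measurable (sampleFamily C S (Sum.inl u))).mono (hle _ rfl) le_rfl
  exact hC.scoreGap (hS a) (hS b)

end SampleModel

theorem stmt9_general {Ω : Type*} [MeasurableSpace Ω] (P : Measure Ω) [IsProbabilityMeasure P]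
    (K N : ℕ) (p μ σ : Fin K → ℝ) (hp : ∀ k, 0 ≤ p k)
    (C : Fin N → Ω → Fin K) (hCmeas : ∀ u, Measurable (C u))
    (S : Fin K → Fin N → Ω → ℝ) (hSmeas : ∀ k u, Measurable (S k u))
    (hdist : ∀ (u : Fin N) (k : Fin K), P {ω : Ω | C u ω = k} = ENNReal.ofReal (p k))
    (hgauss : ∀ (k : Fin K) (u : Fin N),
      Measure.map (S k u) P = gaussianReal (μ k) ((σ k ^ 2).toNNReal))
    (hindep : iIndepFun
      (fun i : Fin N ⊕ (Fin K × Fin N) =>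
        Sum.rec (motive := fun i => Ω → mixType K N i)
          (fun u => C u) (fun ku => S ku.1 ku.2) i) P)
    (a b : Fin K) (hab : a ≠ b) :
    P {ω : Ω | ∑ u, (if C u ω = a then S a u ω else 0)
        ≤ ∑ u, (if C u ω = b then S b u ω else 0)}
      ≤ ENNReal.ofReal (⨅ t : Set.Ioi (0 : ℝ),
          Real.exp ((N : ℝ) * p a * (Real.exp (-(t : ℝ) * μ a + (t : ℝ) ^ 2 * σ a ^ 2 / 2) - 1)
            + (N : ℝ) * p b * (Real.exp ((t : ℝ) * μ b + (t : ℝ) ^ 2 * σ b ^ 2 / 2) - 1))) := by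
  have hF : ∀ i, Measurable (sampleFamily C S i) := Sum.rec hCmeas fun ku => hSmeas ku.1 ku.2
  have hprob : ∀ u k, P.real {ω | C u ω = k} = p k := fun u k => by
    rw [measureReal_def, hdist, ENNReal.toReal_ofReal (hp k)]
  have hCS : ∀ u k, IndepFun (C u) (S k u) P := fun u k =>
    hindep.indepFun (i := Sum.inl u) (j := Sum.inr (k, u)) Sum.inl_ne_inr
  have hmgf : ∀ t u, mgf (sampleGap C S a b u) P t
      = 1 + (p a * (exp (-t * μ a + t ^ 2 * σ a ^ 2 / 2) - 1)
        + p b * (exp (t * μ b + t ^ 2 * σ b ^ 2 / 2) - 1)) := fun t u => by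
    rw [sampleGap, mgf_scoreGap_of_map_eq_gaussianReal hab (hCmeas u) (hSmeas a u) (hSmeas b u)
      (hCS u a) (hCS u b) (hgauss a u) (hgauss b u) (t := t), hprob, hprob,
      Real.coe_toNNReal _ (sq_nonneg _), Real.coe_toNNReal _ (sq_nonneg _)]
    ring
  have hbound : ∀ t : ℝ, 0 < t → P.real {ω | 0 ≤ (∑ u, sampleGap C S a b u) ω}
      ≤ exp (N * (p a * (exp (-t * μ a + t ^ 2 * σ a ^ 2 / 2) - 1)
        + p b * (exp (t * μ b + t ^ 2 * σ b ^ 2 / 2) - 1))) := fun t ht => by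
    have h := measureReal_sum_nonneg_le_exp_sum_mgf_sub_one (X := sampleGap C S a b) ht.le
      (fun u _ => integrable_exp_mul_scoreGap hab (hCmeas u)
        (integrable_exp_mul_of_map_eq_gaussianReal (hgauss a u) _)
        (integrable_exp_mul_of_map_eq_gaussianReal (hgauss b u) _))
      (((iIndepFun_iff_iIndep _ _ _).1 hindep).mgf_sum_of_measurable_blocks
        (fun i => (hF i).comap_le) sampleOf (measurable_sampleGap_iSup_comap C S a b) t .univ)
    simpa only [hmgf, add_sub_cancel_left, Finset.sum_const, Finset.card_univ, Fintype.card_fin,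
      nsmul_eq_mul] using h
  have hevent : {ω | ∑ u, (if C u ω = a then S a u ω else 0)
      ≤ ∑ u, (if C u ω = b then S b u ω else 0)} = {ω | 0 ≤ (∑ u, sampleGap C S a b u) ω} := by
    ext ω
    simp [sampleGap, scoreGap, Finset.sum_apply, Finset.sum_sub_distrib]
  rw [hevent, ← ENNReal.ofReal_toReal (measure_ne_top P _)]
  exact ENNReal.ofReal_le_ofReal (le_ciInf fun t => (hbound t t.2).trans_eq (by ring_nf))

/-- Chernoff bound for score-sum aggregation: with Ũ_k = Σ_u S_{k,u}·1{C_u = k}, if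
p_a μ_a > p_b μ_b then Pr(Ũ_a ≤ Ũ_b) ≤ inf_{t>0} exp(N p_a (e^{-tμ_a + t²σ_a²/2} - 1)
+ N p_b (e^{tμ_b + t²σ_b²/2} - 1)). -/
theorem stmt9 {Ω : Type*} [MeasurableSpace Ω] (P : Measure Ω) [IsProbabilityMeasure P]
    (K N : ℕ) (p μ σ : Fin K → ℝ) (hp : ∀ k, 0 ≤ p k) (hsum : ∑ k, p k = 1)
    (C : Fin N → Ω → Fin K) (hCmeas : ∀ u, Measurable (C u))
    (S : Fin K → Fin N → Ω → ℝ) (hSmeas : ∀ k u, Measurable (S k u))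
    (hdist : ∀ (u : Fin N) (k : Fin K), P {ω : Ω | C u ω = k} = ENNReal.ofReal (p k))
    (hgauss : ∀ (k : Fin K) (u : Fin N),
      Measure.map (S k u) P = gaussianReal (μ k) ((σ k ^ 2).toNNReal))
    (hindep : iIndepFun
      (fun i : Fin N ⊕ (Fin K × Fin N) =>
        Sum.rec (motive := fun i => Ω → mixType K N i)
          (fun u => C u) (fun ku => S ku.1 ku.2) i) P)
    (a b : Fin K) (hab : a ≠ b) (hmean : p b * μ b < p a * μ a) :
    P {ω : Ω | ∑ u, (if C u ω = a then S a u ω else 0)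
        ≤ ∑ u, (if C u ω = b then S b u ω else 0)}
      ≤ ENNReal.ofReal (⨅ t : Set.Ioi (0 : ℝ),
          Real.exp ((N : ℝ) * p a * (Real.exp (-(t : ℝ) * μ a + (t : ℝ) ^ 2 * σ a ^ 2 / 2) - 1)
            + (N : ℝ) * p b * (Real.exp ((t : ℝ) * μ b + (t : ℝ) ^ 2 * σ b ^ 2 / 2) - 1))) :=
  stmt9_general P K N p μ σ hp C hCmeas S hSmeas hdist hgauss hindep a b hab
end

section
/- For p_a, p_b > 0 with p_a·μ_a > p_b·μ_b, the quantity inf_{t>0} exp( N·p_a·(e^{-tμ_a + t²σ_a²/2} − 1) + N·p_b·(e^{tμ_b + t²σ_b²/2} − 1) ) tends to 0 as N → ∞. -/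
open Real Filter

/-! The quantity under the infimum is `exp (N F(t))`, where the exponent `F = chernoffExponent`
vanishes at `0` and has derivative `p_b μ_b - p_a μ_a < 0` there. Hence `F t₀ < 0` for some
`t₀ > 0`, and the infimum is squeezed between `0` and `exp (N F(t₀)) → 0`. -/

theorem exists_gt_lt_of_hasDerivAt_neg {f : ℝ → ℝ} {f' x : ℝ} (hf : HasDerivAt f f' x)
    (hf' : f' < 0) : ∃ z > x, f z < f x := by
  obtain ⟨z, hslope, hz⟩ :=
    ((hf.hasDerivWithinAt.liminf_right_slope_le hf').and_eventually self_mem_nhdsWithin).exists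
  refine ⟨z, hz, lt_of_not_ge fun h => hslope.not_ge ?_⟩
  rw [slope_def_field]
  exact div_nonneg (sub_nonneg.2 h) (sub_nonneg.2 hz.le)

theorem tendsto_iInf_exp_natCast_mul_of_neg {ι : Type*} (g : ι → ℝ) (i : ι) (hi : g i < 0) :
    Tendsto (fun N : ℕ => ⨅ j, exp (N * g j)) atTop (nhds 0) := by
  have hbdd (N : ℕ) : BddBelow (Set.range fun j => exp (N * g j)) :=
    ⟨0, by rintro _ ⟨j, rfl⟩; exact (exp_pos _).le⟩
  exact squeeze_zero (fun N => Real.iInf_nonneg fun j => (exp_pos _).le)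
    (fun N => ciInf_le (hbdd N) i)
    (tendsto_exp_atBot.comp (tendsto_natCast_atTop_atTop.atTop_mul_const_of_neg hi))

noncomputable def chernoffExponent (p_a p_b μ_a μ_b σ_a σ_b t : ℝ) : ℝ :=
  p_a * (exp (-t * μ_a + t ^ 2 * σ_a ^ 2 / 2) - 1) + p_b * (exp (t * μ_b + t ^ 2 * σ_b ^ 2 / 2) - 1)

theorem chernoffExponent_zero (p_a p_b μ_a μ_b σ_a σ_b : ℝ) :
    chernoffExponent p_a p_b μ_a μ_b σ_a σ_b 0 = 0 := by
  simp [chernoffExponent]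

theorem hasDerivAt_exp_mul_add_sq_zero (μ σ : ℝ) :
    HasDerivAt (fun t => exp (t * μ + t ^ 2 * σ ^ 2 / 2)) μ 0 := by
  simpa using (((hasDerivAt_id (0 : ℝ)).mul_const μ).add
    (((hasDerivAt_pow 2 (0 : ℝ)).mul_const (σ ^ 2)).div_const 2)).exp

theorem hasDerivAt_chernoffExponent_zero (p_a p_b μ_a μ_b σ_a σ_b : ℝ) :
    HasDerivAt (chernoffExponent p_a p_b μ_a μ_b σ_a σ_b) (p_b * μ_b - p_a * μ_a) 0 := by
  have ha := ((hasDerivAt_exp_mul_add_sq_zero (-μ_a) σ_a).sub_const 1).const_mul p_a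
  have hb := ((hasDerivAt_exp_mul_add_sq_zero μ_b σ_b).sub_const 1).const_mul p_b
  refine ((ha.add hb).congr_deriv (by ring)).congr_of_eventuallyEq (.of_forall fun t => ?_)
  simp only [chernoffExponent, Pi.add_apply, neg_mul, mul_neg]

theorem stmt11_general (p_a p_b μ_a μ_b σ_a σ_b : ℝ)
    (hmean : p_b * μ_b < p_a * μ_a) :
    Tendsto (fun N : ℕ => ⨅ t : Set.Ioi (0 : ℝ),
        Real.exp ((N : ℝ) * p_a * (Real.exp (-(t : ℝ) * μ_a + (t : ℝ) ^ 2 * σ_a ^ 2 / 2) - 1)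
          + (N : ℝ) * p_b * (Real.exp ((t : ℝ) * μ_b + (t : ℝ) ^ 2 * σ_b ^ 2 / 2) - 1)))
      atTop (nhds 0) := by
  set F := chernoffExponent p_a p_b μ_a μ_b σ_a σ_b
  obtain ⟨t₀, ht₀, hF⟩ :=
    exists_gt_lt_of_hasDerivAt_neg (hasDerivAt_chernoffExponent_zero ..) (sub_neg.2 hmean)
  rw [chernoffExponent_zero] at hF
  convert tendsto_iInf_exp_natCast_mul_of_neg (fun t : Set.Ioi (0 : ℝ) => F t) ⟨t₀, ht₀⟩ hF
    using 5 with N t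
  simp only [F, chernoffExponent]
  ring

/-- For p_a, p_b > 0 with p_a μ_a > p_b μ_b, the Chernoff bound
inf_{t>0} exp(N p_a (e^{-tμ_a + t²σ_a²/2} - 1) + N p_b (e^{tμ_b + t²σ_b²/2} - 1))
tends to 0 as N → ∞. -/
theorem stmt11 (p_a p_b μ_a μ_b σ_a σ_b : ℝ) (hpa : 0 < p_a) (hpb : 0 < p_b)
    (hmean : p_b * μ_b < p_a * μ_a) :
    Tendsto (fun N : ℕ => ⨅ t : Set.Ioi (0 : ℝ),
        Real.exp ((N : ℝ) * p_a * (Real.exp (-(t : ℝ) * μ_a + (t : ℝ) ^ 2 * σ_a ^ 2 / 2) - 1)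
          + (N : ℝ) * p_b * (Real.exp ((t : ℝ) * μ_b + (t : ℝ) ^ 2 * σ_b ^ 2 / 2) - 1)))
      atTop (nhds 0) :=
  stmt11_general p_a p_b μ_a μ_b σ_a σ_b hmean
end

section
/- Let σ_a > σ_b > 0, p_a ∈ (0, 1], μ_a, μ_b ∈ ℝ, and choose ε > 0 small enough that 1 − (1+ε)·σ_b²/σ_a² > 0. With t_N = μ_b + σ_b·√(2(1+ε)·log N) and z_{a,N} = (t_N − μ_a)/σ_a, it holds that N·p_a·(1 − Φ(z_{a,N})) → ∞ as N → ∞, and hence (1 − p_a·(1 − Φ(z_{a,N})))^N → 0. -/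
open Real Filter ProbabilityTheory

/-- The standard normal cumulative distribution function. -/
noncomputable def stdNormalCDF (x : ℝ) : ℝ := cdf (gaussianReal 0 1) x

/-!
The threshold satisfies `z_N + 1 = α √(log N) + β` with `α² = 2(1+ε)σ_b²/σ_a² < 2`. Bounding the
Gaussian tail beyond `z ≥ 0` below by the density at `z + 1` (the mass of `(z, z + 1]`) gives
`N (1 - Φ(z_N)) ≳ exp (s² - (α s + β)² / 2)` with `s = √(log N)`, a quadratic in `s` with positive
leading coefficient. The second claim follows from `(1 - q)^N ≤ exp (-N q)`.
-/

open MeasureTheory Set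

lemma gaussianPDFReal_le_of_abs_sub_le {μ : ℝ} (v : NNReal) {x y : ℝ} (h : |y - μ| ≤ |x - μ|) :
    gaussianPDFReal μ v x ≤ gaussianPDFReal μ v y := by
  simp only [gaussianPDFReal]
  gcongr _ * rexp (-?_ / _)
  exact sq_le_sq.mpr h

lemma gaussianPDFReal_add_one_le_measureReal_Ioi {μ x : ℝ} (v : NNReal) (hx : μ ≤ x) :
    gaussianPDFReal μ v (x + 1) ≤ (gaussianReal μ v).real (Ioi x) := by
  rcases eq_or_ne v 0 with rfl | hv
  · simp
  have hint : IntegrableOn (gaussianPDFReal μ v) (Ioc x (x + 1)) :=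
    (integrable_gaussianPDFReal μ v).integrableOn
  calc gaussianPDFReal μ v (x + 1)
      = ∫ _ in Ioc x (x + 1), gaussianPDFReal μ v (x + 1) := by simp
    _ ≤ ∫ y in Ioc x (x + 1), gaussianPDFReal μ v y := by
        refine setIntegral_mono_on (integrableOn_const measure_Ioc_lt_top.ne) hint
          measurableSet_Ioc fun y hy => gaussianPDFReal_le_of_abs_sub_le v ?_
        rw [abs_of_nonneg (by linarith [hy.1]), abs_of_nonneg (by linarith)]
        linarith [hy.2]
    _ = (gaussianReal μ v).real (Ioc x (x + 1)) := by
        rw [measureReal_def, gaussianReal_apply_eq_integral μ hv, ENNReal.toReal_ofReal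
          (setIntegral_nonneg measurableSet_Ioc fun y _ => gaussianPDFReal_nonneg μ v y)]
    _ ≤ (gaussianReal μ v).real (Ioi x) := measureReal_mono Ioc_subset_Ioi_self

lemma one_sub_stdNormalCDF (x : ℝ) : 1 - stdNormalCDF x = (gaussianReal 0 1).real (Ioi x) := by
  rw [stdNormalCDF, cdf_eq_real, ← compl_Iic, probReal_compl_eq_one_sub measurableSet_Iic]

lemma rexp_log_sub_le_mul_one_sub_stdNormalCDF {x N : ℝ} (hx : 0 ≤ x) (hN : 0 < N) :
    (√(2 * π))⁻¹ * rexp (log N - (x + 1) ^ 2 / 2) ≤ N * (1 - stdNormalCDF x) := by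
  have htail := gaussianPDFReal_add_one_le_measureReal_Ioi 1 hx
  rw [← one_sub_stdNormalCDF] at htail
  simp only [gaussianPDFReal, NNReal.coe_one, mul_one, sub_zero] at htail
  rw [sub_eq_add_neg, exp_add, exp_log hN, ← neg_div, mul_left_comm]
  gcongr

lemma tendsto_sq_sub_sq_affine_div_two_atTop {α β : ℝ} (hα : α ^ 2 < 2) :
    Tendsto (fun s : ℝ => s ^ 2 - (α * s + β) ^ 2 / 2) atTop atTop := by
  have hlin : Tendsto (fun s : ℝ => (1 - α ^ 2 / 2) * s - α * β) atTop atTop :=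
    tendsto_atTop_add_const_right _ _ (tendsto_id.const_mul_atTop (by linarith))
  have hquad := (tendsto_id.atTop_mul_atTop₀ hlin).atTop_add (tendsto_const_nhds (x := -β ^ 2 / 2))
  refine hquad.congr fun s => ?_
  simp only [id]
  ring

lemma tendsto_one_sub_pow_nhds_zero {q : ℕ → ℝ} (hq : ∀ n, q n ≤ 1)
    (h : Tendsto (fun n : ℕ => n * q n) atTop atTop) :
    Tendsto (fun n : ℕ => (1 - q n) ^ n) atTop (nhds 0) := by
  refine squeeze_zero (fun n => pow_nonneg (by linarith [hq n]) n) (fun n => ?_)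
    (tendsto_exp_neg_atTop_nhds_zero.comp h)
  calc (1 - q n) ^ n ≤ rexp (-q n) ^ n :=
        pow_le_pow_left₀ (by linarith [hq n]) (by linarith [add_one_le_exp (-q n)]) n
    _ = rexp (-(n * q n)) := by rw [← exp_nat_mul, mul_neg]

lemma tendsto_mul_one_sub_stdNormalCDF_atTop {α β : ℝ} (hα : 0 < α) (hα2 : α ^ 2 < 2)
    {z : ℕ → ℝ} (hz : ∀ N : ℕ, z N + 1 = α * √(log N) + β) :
    Tendsto (fun N : ℕ => (N : ℝ) * (1 - stdNormalCDF (z N))) atTop atTop := by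
  have hs : Tendsto (fun N : ℕ => √(log N)) atTop atTop :=
    tendsto_sqrt_atTop.comp (tendsto_log_atTop.comp tendsto_natCast_atTop_atTop)
  have hz_top : Tendsto z atTop atTop := by
    have : Tendsto (fun N : ℕ => α * √(log N) + β - 1) atTop atTop :=
      tendsto_atTop_add_const_right _ _
        (tendsto_atTop_add_const_right _ _ (hs.const_mul_atTop hα))
    exact this.congr fun N => by linarith [hz N]
  have hquad := (tendsto_sq_sub_sq_affine_div_two_atTop (β := β) hα2).comp hs
  refine tendsto_atTop_mono' _ ?_
    ((tendsto_exp_atTop.comp hquad).const_mul_atTop (inv_pos.mpr (sqrt_pos.mpr two_pi_pos)))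
  filter_upwards [hz_top.eventually_ge_atTop 0, eventually_ge_atTop 1] with N hzN hN
  have hN' : (1 : ℝ) ≤ N := by exact_mod_cast hN
  have hbound := rexp_log_sub_le_mul_one_sub_stdNormalCDF hzN (zero_lt_one.trans_le hN')
  rwa [← sq_sqrt (log_nonneg hN'), hz] at hbound

/-- For σ_a > σ_b > 0 and ε > 0 small enough that 1 - (1+ε)σ_b²/σ_a² > 0, with
t_N = μ_b + σ_b √(2(1+ε) log N) and z_{a,N} = (t_N - μ_a)/σ_a, we have
N p_a (1 - Φ(z_{a,N})) → ∞ and hence (1 - p_a (1 - Φ(z_{a,N})))^N → 0. -/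
theorem stmt18 (p_a σ_a σ_b μ_a μ_b ε : ℝ) (hp0 : 0 < p_a) (hp1 : p_a ≤ 1)
    (hσb : 0 < σ_b) (hσ : σ_b < σ_a) (hε : 0 < ε)
    (hεsmall : 0 < 1 - (1 + ε) * σ_b ^ 2 / σ_a ^ 2)
    (t : ℕ → ℝ) (ht : ∀ N : ℕ, t N = μ_b + σ_b * Real.sqrt (2 * (1 + ε) * Real.log N))
    (z : ℕ → ℝ) (hz : ∀ N : ℕ, z N = (t N - μ_a) / σ_a) :
    Tendsto (fun N : ℕ => (N : ℝ) * p_a * (1 - stdNormalCDF (z N))) atTop atTop ∧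
    Tendsto (fun N : ℕ => (1 - p_a * (1 - stdNormalCDF (z N))) ^ N) atTop (nhds 0) := by
  have hσa : 0 < σ_a := hσb.trans hσ
  set α := σ_b * √(2 * (1 + ε)) / σ_a
  have hα2 : α ^ 2 < 2 := by
    have : α ^ 2 = 2 * ((1 + ε) * σ_b ^ 2 / σ_a ^ 2) := by
      rw [div_pow, mul_pow, sq_sqrt (by positivity)]
      ring
    linarith
  have hzs : ∀ N : ℕ, z N + 1 = α * √(log N) + ((μ_b - μ_a) / σ_a + 1) := fun N => by
    rw [hz, ht, sqrt_mul (by positivity)]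
    simp only [α]
    field_simp
    ring
  have hdiv : Tendsto (fun N : ℕ => (N : ℝ) * (p_a * (1 - stdNormalCDF (z N)))) atTop atTop := by
    simpa only [mul_left_comm] using
      (tendsto_mul_one_sub_stdNormalCDF_atTop (by positivity) hα2 hzs).const_mul_atTop hp0
  have hq : ∀ N, p_a * (1 - stdNormalCDF (z N)) ≤ 1 := fun N => by
    rw [one_sub_stdNormalCDF]
    exact mul_le_one₀ hp1 measureReal_nonneg measureReal_le_one
  exact ⟨by simpa only [mul_assoc] using hdiv, tendsto_one_sub_pow_nhds_zero hq hdiv⟩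
end
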